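/- Every simple type over the base type N is trivially isomorphic to an uncurried type, i.e. for every simple type σ there exists a type π generated by the grammar ρ ::= N | θ → N, θ ::= ρ | θ × ρ, such that σ ∼ π. -/
import Mathlib


/-- Simple types over a single base type `N`. -/
inductive SType : Type
  | N : SType
  | arrow : SType → SType → SType
  | prod : SType → SType → SType
  deriving DecidableEq

/-- Trivial isomorphism: the least congruence on simple types containing the
four generating equivalences. -/
inductive TrivIso : SType → SType → Prop
  | refl (σ : SType) : TrivIso σ σ
  | symm {σ τ : SType} : TrivIso σ τ → TrivIso τ σ
  | trans {σ τ ρ : SType} : TrivIso σ τ → TrivIso τ ρ → TrivIso σ ρ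
  | arrowCongr {σ σ' τ τ' : SType} :
      TrivIso σ σ' → TrivIso τ τ' → TrivIso (.arrow σ τ) (.arrow σ' τ')
  | prodCongr {σ σ' τ τ' : SType} :
      TrivIso σ σ' → TrivIso τ τ' → TrivIso (.prod σ τ) (.prod σ' τ')
  | curry (ρ σ τ : SType) :
      TrivIso (.arrow (.prod ρ σ) τ) (.arrow ρ (.arrow σ τ))
  | distrib (ρ σ τ : SType) :
      TrivIso (.arrow ρ (.prod σ τ)) (.prod (.arrow ρ σ) (.arrow ρ τ))
  | assoc (ρ σ τ : SType) :
      TrivIso (.prod ρ (.prod σ τ)) (.prod (.prod ρ σ) τ)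
  | comm (σ τ : SType) : TrivIso (.prod σ τ) (.prod τ σ)

mutual
  /-- The class `ρ` of the grammar `ρ ::= N | θ → N`. -/
  inductive UncurriedR : SType → Prop
    | N : UncurriedR .N
    | arrow {θ : SType} : UncurriedTheta θ → UncurriedR (.arrow θ .N)
  /-- The class `θ` of the grammar `θ ::= ρ | θ × ρ`: the uncurried types. -/
  inductive UncurriedTheta : SType → Prop
    | ofR {ρ : SType} : UncurriedR ρ → UncurriedTheta ρ
    | prod {θ ρ : SType} :
        UncurriedTheta θ → UncurriedR ρ → UncurriedTheta (.prod θ ρ)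
end

/-- Flattening: the product of two uncurried types is isomorphic to an
uncurried type. -/
theorem flatten : ∀ θ₂ θ₁ : SType, UncurriedTheta θ₁ → UncurriedTheta θ₂ →
    ∃ θ, UncurriedTheta θ ∧ TrivIso (.prod θ₁ θ₂) θ := by
  intro θ₂
  induction θ₂ with
  | N => exact fun θ₁ h1 _ =>
      ⟨.prod θ₁ .N, .prod h1 .N, .refl _⟩
  | arrow a b iha ihb =>
    intro θ₁ h1 h2
    rcases h2 with ⟨hr⟩
    exact ⟨.prod θ₁ (.arrow a b), .prod h1 hr, .refl _⟩
  | prod a b iha ihb =>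
    intro θ₁ h1 h2
    rcases h2 with ⟨hr⟩ | ⟨ht, hr⟩
    · cases hr
    · obtain ⟨θ, hθ, hiso⟩ := iha θ₁ h1 ht
      exact ⟨.prod θ b, .prod hθ hr,
        .trans (.assoc θ₁ a b) (.prodCongr hiso (.refl b))⟩

/-- Arrow into an `R`-type. -/
theorem arrR {θ ρ : SType} (h1 : UncurriedTheta θ) (h2 : UncurriedR ρ) :
    ∃ ρ', UncurriedR ρ' ∧ TrivIso (.arrow θ ρ) ρ' := by
  cases h2 with
  | N => exact ⟨.arrow θ .N, .arrow h1, .refl _⟩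
  | @arrow θ₂ ht2 =>
    obtain ⟨θ₃, hθ₃, hiso⟩ := flatten θ₂ θ h1 ht2
    exact ⟨.arrow θ₃ .N, .arrow hθ₃,
      .trans (.symm (.curry θ θ₂ .N)) (.arrowCongr hiso (.refl .N))⟩

/-- Arrow into a `θ`-type. -/
theorem arrT : ∀ θ' θ : SType, UncurriedTheta θ → UncurriedTheta θ' →
    ∃ π, UncurriedTheta π ∧ TrivIso (.arrow θ θ') π := by
  intro θ'
  induction θ' with
  | N =>
    intro θ h1 _
    obtain ⟨ρ', hρ', hiso⟩ := arrR h1 .N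
    exact ⟨ρ', .ofR hρ', hiso⟩
  | arrow a b iha ihb =>
    intro θ h1 h2
    rcases h2 with ⟨hr⟩
    obtain ⟨ρ', hρ', hiso⟩ := arrR h1 hr
    exact ⟨ρ', .ofR hρ', hiso⟩
  | prod a b iha ihb =>
    intro θ h1 h2
    rcases h2 with ⟨hr⟩ | ⟨ht, hr⟩
    · cases hr
    · obtain ⟨π, hπ, hiso⟩ := iha θ h1 ht
      obtain ⟨ρ', hρ', hiso'⟩ := arrR h1 hr
      exact ⟨.prod π ρ', .prod hπ hρ',
        .trans (.distrib θ a b) (.prodCongr hiso hiso')⟩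

/-- Every simple type is trivially isomorphic to an uncurried type. -/
theorem every_type_has_uncurried_form (σ : SType) :
    ∃ π : SType, UncurriedTheta π ∧ TrivIso σ π := by
  induction σ with
  | N => exact ⟨.N, .ofR .N, .refl _⟩
  | arrow a b iha ihb =>
    obtain ⟨θa, hθa, ha⟩ := iha
    obtain ⟨θb, hθb, hb⟩ := ihb
    obtain ⟨π, hπ, hiso⟩ := arrT θb θa hθa hθb
    exact ⟨π, hπ, .trans (.arrowCongr ha hb) hiso⟩
  | prod a b iha ihb =>
    obtain ⟨θa, hθa, ha⟩ := iha
    obtain ⟨θb, hθb, hb⟩ := ihb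
    obtain ⟨θ, hθ, hiso⟩ := flatten θb θa hθa hθb
    exact ⟨θ, hθ, .trans (.prodCongr ha hb) hiso⟩
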